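/- arXiv:2011.01494 — 2 statements merged into one kernel-verified Lean document; each statement's English description precedes it below -/
import Mathlib

section
/- Let $Y_{k-1} \in \mathbb{R}^{p\times q}$, $T \in \mathbb{R}^{p\times q}$, $\gamma > 0$, and set $Y_k = \begin{bmatrix} 0 & Y_{k-1} \\ Y_{k-1} & 2\gamma T \end{bmatrix} \in \mathbb{R}^{2p \times 2q}$ (block structure: the extra rows/columns correspond to appropriate dimensions with $Y_{k-1}$ appearing twice). Define $\Gamma = (I_p + Y_{k-1}Y_{k-1}^{\T})^{-1} Y_{k-1} T^{\T}$ and $\Psi = I_p + Y_{k-1}Y_{k-1}^{\T} + 4\gamma^2 T (I_q + Y_{k-1}^{\T}Y_{k-1})^{-1} T^{\T}$. Then $(I_{2p} + Y_k Y_k^{\T})^{-1} = \begin{bmatrix} I_p & -2\gamma\Gamma \\ 0 & I_p \end{bmatrix} \begin{bmatrix} (I_p + Y_{k-1}Y_{k-1}^{\T})^{-1} & 0 \\ 0 & \Psi^{-1} \end{bmatrix} \begin{bmatrix} I_p & 0 \\ -2\gamma\Gamma^{\T} & I_p \end{bmatrix}$. -/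
/-! The top-left block of `1 + Y_k Y_kᵀ` is `A = 1 + Y Yᵀ`, and the push-through identity
`(1 + Yᵀ Y)⁻¹ = 1 - Yᵀ A⁻¹ Y` (Woodbury) shows that the Schur complement of `A` is `Ψ`.
Inverting the LDU factorisation of the block matrix then gives the stated product. -/

open Matrix

namespace Matrix

section CommRing

variable {m n α : Type*} [Fintype m] [Fintype n] [DecidableEq m] [DecidableEq n] [CommRing α]

theorem inv_fromBlocks_eq_of_isUnit₁₁ (A : Matrix m m α) (B : Matrix m n α) (C : Matrix n m α)
    (D : Matrix n n α) (hA : IsUnit A) (hS : IsUnit (D - C * A⁻¹ * B)) :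
    (fromBlocks A B C D)⁻¹ =
      fromBlocks 1 (-(A⁻¹ * B)) 0 1 * fromBlocks A⁻¹ 0 0 (D - C * A⁻¹ * B)⁻¹ *
        fromBlocks 1 0 (-(C * A⁻¹)) 1 := by
  obtain ⟨_⟩ := hA.nonempty_invertible
  obtain ⟨_⟩ := hS.nonempty_invertible
  have hU : (fromBlocks 1 (A⁻¹ * B) 0 1 : Matrix (m ⊕ n) (m ⊕ n) α)⁻¹ =
      fromBlocks 1 (-(A⁻¹ * B)) 0 1 :=
    inv_eq_left_inv <| by simp [fromBlocks_multiply]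
  have hL : (fromBlocks 1 0 (C * A⁻¹) 1 : Matrix (m ⊕ n) (m ⊕ n) α)⁻¹ =
      fromBlocks 1 0 (-(C * A⁻¹)) 1 :=
    inv_eq_left_inv <| by simp [fromBlocks_multiply]
  have hD : (fromBlocks A 0 0 (D - C * A⁻¹ * B))⁻¹ =
      fromBlocks A⁻¹ 0 0 (D - C * A⁻¹ * B)⁻¹ :=
    inv_eq_left_inv <| by simp [fromBlocks_multiply]
  rw [fromBlocks_eq_of_invertible₁₁ A B C D, invOf_eq_nonsing_inv, Matrix.mul_inv_rev,
    Matrix.mul_inv_rev, hU, hD, hL]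
  exact (Matrix.mul_assoc _ _ _).symm

theorem inv_one_add_mul_eq_sub (U : Matrix n m α) (V : Matrix m n α) (h : IsUnit (1 + V * U)) :
    (1 + U * V)⁻¹ = 1 - U * (1 + V * U)⁻¹ * V := by
  simpa using add_mul_mul_inv_eq_sub 1 U 1 V isUnit_one isUnit_one (by simpa using h)

end CommRing

theorem posDef_one_add_mul_transpose {m n : Type*} [Fintype m] [Fintype n] [DecidableEq m]
    (Y : Matrix m n ℝ) : (1 + Y * Yᵀ).PosDef := by
  simpa using PosDef.one.add_posSemidef (posSemidef_self_mul_conjTranspose Y)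

variable {m n : Type*} [Fintype m] [Fintype n] [DecidableEq m] [DecidableEq n]

theorem posDef_one_add_add_mul_inv_mul_transpose (Y : Matrix m n ℝ) (S : Matrix m n ℝ) :
    (1 + Y * Yᵀ + S * (1 + Yᵀ * Y)⁻¹ * Sᵀ).PosDef := by
  have hAq : (1 + Yᵀ * Y).PosDef := by simpa using posDef_one_add_mul_transpose Yᵀ
  simpa using (posDef_one_add_mul_transpose Y).add_posSemidef
    (hAq.posSemidef.inv.mul_mul_conjTranspose_same S)

theorem schur_one_add_mul_transpose (Y S : Matrix m n ℝ) :
    1 + Y * Yᵀ + S * Sᵀ - S * Yᵀ * (1 + Y * Yᵀ)⁻¹ * (Y * Sᵀ) =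
      1 + Y * Yᵀ + S * (1 + Yᵀ * Y)⁻¹ * Sᵀ := by
  have hA := (posDef_one_add_mul_transpose Y).isUnit
  rw [inv_one_add_mul_eq_sub Yᵀ Y hA]
  simp only [Matrix.mul_sub, Matrix.sub_mul, Matrix.mul_one, Matrix.mul_assoc]
  abel

end Matrix

theorem stmt2_general {p q : ℕ} (Y T : Matrix (Fin p) (Fin q) ℝ) (γ : ℝ)
    (Γ Ψ : Matrix (Fin p) (Fin p) ℝ)
    (hΓ : Γ = ((1 : Matrix (Fin p) (Fin p) ℝ) + Y * Yᵀ)⁻¹ * (Y * Tᵀ))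
    (hΨ : Ψ = 1 + Y * Yᵀ +
      (4 * γ ^ 2) • (T * ((1 : Matrix (Fin q) (Fin q) ℝ) + Yᵀ * Y)⁻¹ * Tᵀ)) :
    ((1 : Matrix (Fin p ⊕ Fin p) (Fin p ⊕ Fin p) ℝ) +
        Matrix.fromBlocks 0 Y Y ((2 * γ) • T) * (Matrix.fromBlocks 0 Y Y ((2 * γ) • T))ᵀ)⁻¹
      = Matrix.fromBlocks 1 ((-(2 * γ)) • Γ) 0 1 *
          Matrix.fromBlocks (((1 : Matrix (Fin p) (Fin p) ℝ) + Y * Yᵀ)⁻¹) 0 0 (Ψ⁻¹) *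
          Matrix.fromBlocks 1 0 ((-(2 * γ)) • Γᵀ) 1 := by
  set S := (2 * γ) • T
  have hΨS : Ψ = 1 + Y * Yᵀ + S * (1 + Yᵀ * Y)⁻¹ * Sᵀ := by
    rw [hΨ]; simp only [S, transpose_smul, Matrix.smul_mul, Matrix.mul_smul, smul_smul]; ring_nf
  have hblocks : 1 + fromBlocks 0 Y Y S * (fromBlocks 0 Y Y S)ᵀ =
      fromBlocks (1 + Y * Yᵀ) (Y * Sᵀ) (S * Yᵀ) (1 + Y * Yᵀ + S * Sᵀ) := by
    rw [fromBlocks_transpose, fromBlocks_multiply, ← fromBlocks_one, fromBlocks_add]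
    simp [add_assoc]
  have hA := (posDef_one_add_mul_transpose Y).isUnit
  have hSchur : IsUnit (1 + Y * Yᵀ + S * Sᵀ - S * Yᵀ * (1 + Y * Yᵀ)⁻¹ * (Y * Sᵀ)) := by
    rw [schur_one_add_mul_transpose]
    exact (posDef_one_add_add_mul_inv_mul_transpose Y S).isUnit
  rw [hblocks, inv_fromBlocks_eq_of_isUnit₁₁ _ _ _ _ hA hSchur, schur_one_add_mul_transpose, ← hΨS]
  congr 2
  · rw [hΓ]; simp [S, neg_smul]
  · rw [hΓ]; simp [S, neg_smul, Matrix.mul_assoc, transpose_nonsing_inv]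

theorem stmt2 {p q : ℕ} (Y T : Matrix (Fin p) (Fin q) ℝ) (γ : ℝ) (hγ : 0 < γ)
    (Γ Ψ : Matrix (Fin p) (Fin p) ℝ)
    (hΓ : Γ = ((1 : Matrix (Fin p) (Fin p) ℝ) + Y * Yᵀ)⁻¹ * (Y * Tᵀ))
    (hΨ : Ψ = 1 + Y * Yᵀ +
      (4 * γ ^ 2) • (T * ((1 : Matrix (Fin q) (Fin q) ℝ) + Yᵀ * Y)⁻¹ * Tᵀ)) :
    ((1 : Matrix (Fin p ⊕ Fin p) (Fin p ⊕ Fin p) ℝ) +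
        Matrix.fromBlocks 0 Y Y ((2 * γ) • T) * (Matrix.fromBlocks 0 Y Y ((2 * γ) • T))ᵀ)⁻¹
      = Matrix.fromBlocks 1 ((-(2 * γ)) • Γ) 0 1 *
          Matrix.fromBlocks (((1 : Matrix (Fin p) (Fin p) ℝ) + Y * Yᵀ)⁻¹) 0 0 (Ψ⁻¹) *
          Matrix.fromBlocks 1 0 ((-(2 * γ)) • Γᵀ) 1 :=
  stmt2_general Y T γ Γ Ψ hΓ hΨ
end

section
/- Let $A_0, G_0, H_0, X \in \mathbb{R}^{n\times n}$ with $G_0, H_0, X$ symmetric positive semi-definite and $I + G_0 H_0$ invertible, and suppose $A_0^{\T} X (I + G_0 X)^{-1} A_0 + H_0 = X$. Define $A_1 = A_0(I+G_0H_0)^{-1}A_0$, $G_1 = G_0 + A_0(I+G_0H_0)^{-1}G_0A_0^{\T}$, $H_1 = H_0 + A_0^{\T}H_0(I+G_0H_0)^{-1}A_0$. Then, provided $I + G_1 X$ is invertible, $A_1^{\T} X (I + G_1 X)^{-1} A_1 + H_1 = X$. -/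
open Matrix

set_option maxHeartbeats 1600000 in
theorem stmt12 {n : ℕ} (A0 G0 H0 X : Matrix (Fin n) (Fin n) ℝ)
    (hG0 : G0.PosSemidef) (hH0 : H0.PosSemidef) (hX : X.PosSemidef)
    (hunit : IsUnit ((1 : Matrix (Fin n) (Fin n) ℝ) + G0 * H0))
    (hdare : A0ᵀ * X * ((1 : Matrix (Fin n) (Fin n) ℝ) + G0 * X)⁻¹ * A0 + H0 = X)
    (hG1X : IsUnit ((1 : Matrix (Fin n) (Fin n) ℝ) +
      (G0 + A0 * ((1 : Matrix (Fin n) (Fin n) ℝ) + G0 * H0)⁻¹ * G0 * A0ᵀ) * X)) :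
    (A0 * ((1 : Matrix (Fin n) (Fin n) ℝ) + G0 * H0)⁻¹ * A0)ᵀ * X *
        ((1 : Matrix (Fin n) (Fin n) ℝ) +
          (G0 + A0 * ((1 : Matrix (Fin n) (Fin n) ℝ) + G0 * H0)⁻¹ * G0 * A0ᵀ) * X)⁻¹ *
        (A0 * ((1 : Matrix (Fin n) (Fin n) ℝ) + G0 * H0)⁻¹ * A0)
      + (H0 + A0ᵀ * H0 * ((1 : Matrix (Fin n) (Fin n) ℝ) + G0 * H0)⁻¹ * A0) = X := by
  -- symmetry facts
  have hG0t : G0ᵀ = G0 := by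
    have := hG0.isHermitian; simpa [Matrix.IsHermitian, Matrix.conjTranspose_eq_transpose_of_trivial] using this
  have hH0t : H0ᵀ = H0 := by
    have := hH0.isHermitian; simpa [Matrix.IsHermitian, Matrix.conjTranspose_eq_transpose_of_trivial] using this
  have hXt : Xᵀ = X := by
    have := hX.isHermitian; simpa [Matrix.IsHermitian, Matrix.conjTranspose_eq_transpose_of_trivial] using this
  -- invertibility of 1 + G0 * X
  have hMunit : IsUnit ((1 : Matrix (Fin n) (Fin n) ℝ) + G0 * X) := by
    open scoped MatrixOrder in
    set S := CFC.sqrt X with hSdef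
    open scoped MatrixOrder in
    have hSS : S * S = X := CFC.sqrt_mul_sqrt_self X hX.nonneg
    open scoped MatrixOrder in
    have hSps : S.PosSemidef := (CFC.sqrt_nonneg X).posSemidef
    have hSH : Sᴴ = S := hSps.isHermitian
    have hPD : ((1 : Matrix (Fin n) (Fin n) ℝ) + S * G0 * S).PosDef := by
      have h1 : (Sᴴ * G0 * S).PosSemidef := hG0.conjTranspose_mul_mul_same S
      rw [hSH] at h1
      exact Matrix.PosDef.one.add_posSemidef h1
    rw [Matrix.isUnit_iff_isUnit_det]
    have hdet : ((1 : Matrix (Fin n) (Fin n) ℝ) + G0 * X).det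
        = ((1 : Matrix (Fin n) (Fin n) ℝ) + S * G0 * S).det := by
      calc ((1 : Matrix (Fin n) (Fin n) ℝ) + G0 * X).det
          = ((1 : Matrix (Fin n) (Fin n) ℝ) + (G0 * S) * S).det := by
            rw [← hSS, mul_assoc]
        _ = ((1 : Matrix (Fin n) (Fin n) ℝ) + S * (G0 * S)).det :=
            Matrix.det_one_add_mul_comm _ _
        _ = ((1 : Matrix (Fin n) (Fin n) ℝ) + S * G0 * S).det := by rw [mul_assoc]
    rw [hdet]
    exact isUnit_iff_ne_zero.mpr hPD.det_pos.ne'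
  -- abbreviations
  set B : Matrix (Fin n) (Fin n) ℝ := ((1 : Matrix (Fin n) (Fin n) ℝ) + G0 * X)⁻¹ with hBdef
  set C : Matrix (Fin n) (Fin n) ℝ := ((1 : Matrix (Fin n) (Fin n) ℝ) + G0 * H0)⁻¹ with hCdef
  set D : Matrix (Fin n) (Fin n) ℝ := ((1 : Matrix (Fin n) (Fin n) ℝ) +
      (G0 + A0 * C * G0 * A0ᵀ) * X)⁻¹ with hDdef
  have hMdet := (Matrix.isUnit_iff_isUnit_det _).mp hMunit
  have hWdet := (Matrix.isUnit_iff_isUnit_det _).mp hunit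
  have hDdet := (Matrix.isUnit_iff_isUnit_det _).mp hG1X
  have hB1 : ((1 : Matrix (Fin n) (Fin n) ℝ) + G0 * X) * B = 1 :=
    Matrix.mul_nonsing_inv _ hMdet
  have hB2 : B * ((1 : Matrix (Fin n) (Fin n) ℝ) + G0 * X) = 1 :=
    Matrix.nonsing_inv_mul _ hMdet
  have hC1 : ((1 : Matrix (Fin n) (Fin n) ℝ) + G0 * H0) * C = 1 :=
    Matrix.mul_nonsing_inv _ hWdet
  have hC2 : C * ((1 : Matrix (Fin n) (Fin n) ℝ) + G0 * H0) = 1 :=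
    Matrix.nonsing_inv_mul _ hWdet
  have hD2 : D * ((1 : Matrix (Fin n) (Fin n) ℝ) + (G0 + A0 * C * G0 * A0ᵀ) * X) = 1 :=
    Matrix.nonsing_inv_mul _ hDdet
  -- transpose of C
  have hCt : Cᵀ = ((1 : Matrix (Fin n) (Fin n) ℝ) + H0 * G0)⁻¹ := by
    rw [hCdef, Matrix.transpose_nonsing_inv, Matrix.transpose_add, Matrix.transpose_one,
      Matrix.transpose_mul, hG0t, hH0t]
  set C' : Matrix (Fin n) (Fin n) ℝ := ((1 : Matrix (Fin n) (Fin n) ℝ) + H0 * G0)⁻¹ with hC'def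
  have hW'det : IsUnit ((1 : Matrix (Fin n) (Fin n) ℝ) + H0 * G0).det := by
    have : ((1 : Matrix (Fin n) (Fin n) ℝ) + H0 * G0).det
        = ((1 : Matrix (Fin n) (Fin n) ℝ) + G0 * H0).det := Matrix.det_one_add_mul_comm _ _
    rw [this]; exact hWdet
  have hC'2 : C' * ((1 : Matrix (Fin n) (Fin n) ℝ) + H0 * G0) = 1 :=
    Matrix.nonsing_inv_mul _ hW'det
  -- basic identities
  have e1 : ((1 : Matrix (Fin n) (Fin n) ℝ) + G0 * X) * (B * A0) = A0 := by
    rw [← mul_assoc, hB1, one_mul]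
  have e2 : A0ᵀ * X * (B * A0) = X - H0 := by
    rw [← mul_assoc]; exact eq_sub_of_add_eq hdare
  -- Step 1: (1 + G1 X) * (B A0 * (B A0)) = A0 * C * A0
  have key1 : ((1 : Matrix (Fin n) (Fin n) ℝ) + (G0 + A0 * C * G0 * A0ᵀ) * X)
      * (B * A0 * (B * A0)) = A0 * C * A0 := by
    have step : ((1 : Matrix (Fin n) (Fin n) ℝ) + (G0 + A0 * C * G0 * A0ᵀ) * X)
        * (B * A0 * (B * A0))
        = (((1 : Matrix (Fin n) (Fin n) ℝ) + G0 * X) * (B * A0)) * (B * A0)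
          + A0 * C * (G0 * ((A0ᵀ * X * (B * A0)) * (B * A0))) := by
      noncomm_ring
    rw [step, e1, e2]
    have hA0C : A0 = A0 * C * ((1 : Matrix (Fin n) (Fin n) ℝ) + G0 * H0) := by
      rw [mul_assoc, hC2, mul_one]
    calc A0 * (B * A0) + A0 * C * (G0 * ((X - H0) * (B * A0)))
        = A0 * C * ((1 : Matrix (Fin n) (Fin n) ℝ) + G0 * H0) * (B * A0)
          + A0 * C * (G0 * ((X - H0) * (B * A0))) := by rw [← hA0C]
      _ = A0 * C * (((1 : Matrix (Fin n) (Fin n) ℝ) + G0 * X) * (B * A0)) := by noncomm_ring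
      _ = A0 * C * A0 := by rw [e1]
  -- Step 2: D * (A0 * C * A0) = B A0 * (B A0)
  have key2 : D * (A0 * C * A0) = B * A0 * (B * A0) := by
    rw [← key1, ← mul_assoc, hD2, one_mul]
  -- Step 3 auxiliary: C' * ((X - H0) * (B * A0)) = X * (B * A0) - C' * (H0 * A0)
  have s1 : ((1 : Matrix (Fin n) (Fin n) ℝ) + H0 * G0) * (X * (B * A0) - C' * (H0 * A0))
      = (X - H0) * (B * A0) := by
    have hC'H0 : ((1 : Matrix (Fin n) (Fin n) ℝ) + H0 * G0) * (C' * (H0 * A0)) = H0 * A0 := by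
      rw [← mul_assoc]
      rw [Matrix.mul_nonsing_inv _ hW'det, one_mul]
    have hH0A0 : H0 * A0 = H0 * (((1 : Matrix (Fin n) (Fin n) ℝ) + G0 * X) * (B * A0)) := by
      rw [e1]
    rw [mul_sub, hC'H0, hH0A0]
    noncomm_ring
  have s2 : C' * ((X - H0) * (B * A0)) = X * (B * A0) - C' * (H0 * A0) := by
    rw [← s1, ← mul_assoc, hC'2, one_mul]
  -- Step 3: (A0 C A0)ᵀ * X * (B A0 * (B A0)) = X - (H0 + A0ᵀ H0 C A0)
  have key3 : (A0 * C * A0)ᵀ * X * (B * A0 * (B * A0))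
      = X - (H0 + A0ᵀ * H0 * C * A0) := by
    have ht : (A0 * C * A0)ᵀ = A0ᵀ * C' * A0ᵀ := by
      rw [Matrix.transpose_mul, Matrix.transpose_mul, hCt]
      noncomm_ring
    have hHC : H0 * C = C' * H0 := by
      have h : ((1 : Matrix (Fin n) (Fin n) ℝ) + H0 * G0) * H0
          = H0 * ((1 : Matrix (Fin n) (Fin n) ℝ) + G0 * H0) := by noncomm_ring
      have h2 : ((1 : Matrix (Fin n) (Fin n) ℝ) + H0 * G0) * (H0 * C)
          = H0 * (((1 : Matrix (Fin n) (Fin n) ℝ) + G0 * H0) * C) := by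
        rw [← mul_assoc, h, mul_assoc]
      calc H0 * C = C' * (((1 : Matrix (Fin n) (Fin n) ℝ) + H0 * G0) * (H0 * C)) := by
            rw [← mul_assoc, hC'2, one_mul]
        _ = C' * (H0 * (((1 : Matrix (Fin n) (Fin n) ℝ) + G0 * H0) * C)) := by rw [h2]
        _ = C' * H0 := by rw [hC1, mul_one]
    calc (A0 * C * A0)ᵀ * X * (B * A0 * (B * A0))
        = A0ᵀ * (C' * ((A0ᵀ * X * (B * A0)) * (B * A0))) := by rw [ht]; noncomm_ring
      _ = A0ᵀ * (C' * ((X - H0) * (B * A0))) := by rw [e2]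
      _ = A0ᵀ * (X * (B * A0) - C' * (H0 * A0)) := by rw [s2]
      _ = A0ᵀ * X * (B * A0) - A0ᵀ * (C' * H0) * A0 := by noncomm_ring
      _ = (X - H0) - A0ᵀ * (H0 * C) * A0 := by rw [e2, hHC]
      _ = X - (H0 + A0ᵀ * H0 * C * A0) := by noncomm_ring
  -- assemble
  have final : (A0 * C * A0)ᵀ * X * D * (A0 * C * A0)
      = X - (H0 + A0ᵀ * H0 * C * A0) := by
    rw [mul_assoc _ D _, key2]
    exact key3
  rw [final]
  abel
end
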